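/- Let L be a regular-epi localization functor on XMod. Then L is conditionally flat if and only if for every short exact sequence 1 → N → T → Q → 1 of crossed modules in which N, T and Q are all L-local, the pullback sequence along any morphism Q' → Q is L-flat. -/

import Mathlib

set_option linter.unusedVariables false

/-- A crossed module of groups `(M, G, d)` with `G` acting on `M`. -/
structure XMod : Type 1 where
  M : Type
  G : Type
  [grpM : Group M]
  [grpG : Group G]
  act : G →* MulAut M
  d : M →* G
  act_d : ∀ (b : G) (t : M), d (act b t) = b * d t * b⁻¹
  peiffer : ∀ (t s : M), act (d t) s = t * s * t⁻¹

attribute [instance] XMod.grpM XMod.grpG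

/-- A morphism of crossed modules. -/
structure XModHom (N T : XMod) where
  f1 : N.M →* T.M
  f2 : N.G →* T.G
  comm_d : ∀ n, T.d (f1 n) = f2 (N.d n)
  equiv : ∀ (b : N.G) (n : N.M), f1 (N.act b n) = T.act (f2 b) (f1 n)

namespace XModHom

theorem ext {N T : XMod} {f g : XModHom N T} (h1 : f.f1 = g.f1) (h2 : f.f2 = g.f2) :
    f = g := by
  cases f; cases g; cases h1; cases h2; rfl

/-- The identity morphism. -/
def id (T : XMod) : XModHom T T :=
  ⟨MonoidHom.id _, MonoidHom.id _, fun _ => rfl, fun _ _ => rfl⟩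

/-- Composition of morphisms of crossed modules. -/
def comp {A B C : XMod} (g : XModHom B C) (f : XModHom A B) : XModHom A C where
  f1 := g.f1.comp f.f1
  f2 := g.f2.comp f.f2
  comm_d := by intro n; simp [MonoidHom.comp_apply, g.comm_d, f.comm_d]
  equiv := by intro b n; simp [MonoidHom.comp_apply, f.equiv, g.equiv]

/-- The trivial morphism of crossed modules. -/
def triv (A B : XMod) : XModHom A B where
  f1 := 1
  f2 := 1
  comm_d := by intro n; simp
  equiv := by intro b n; simp

/-- A morphism of crossed modules is an isomorphism if it has a two-sided inverse. -/
def IsIso {A B : XMod} (f : XModHom A B) : Prop :=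
  ∃ g : XModHom B A, comp g f = id A ∧ comp f g = id B

/-- Regular epimorphisms of crossed modules are exactly the componentwise
surjective morphisms. -/
def RegEpi {A B : XMod} (f : XModHom A B) : Prop :=
  Function.Surjective f.f1 ∧ Function.Surjective f.f2

/-- `κ` is a kernel of `α` (in the categorical sense). -/
def IsKernelOf {N T Q : XMod} (κ : XModHom N T) (α : XModHom T Q) : Prop :=
  comp α κ = triv N Q ∧
    ∀ (X : XMod) (u : XModHom X T), comp α u = triv X Q →
      ∃! v : XModHom X N, comp κ v = u

end XModHom

/-- `1 → N → T → Q → 1` is a short exact sequence of crossed modules. -/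
def ShortExact {N T Q : XMod} (κ : XModHom N T) (α : XModHom T Q) : Prop :=
  XModHom.IsKernelOf κ α ∧ XModHom.RegEpi α
/-- A localization functor (coaugmented idempotent functor) on `XMod`. -/
structure LocalizationFunctor where
  obj : XMod → XMod
  map : ∀ {A B : XMod}, XModHom A B → XModHom (obj A) (obj B)
  map_id : ∀ A : XMod, map (XModHom.id A) = XModHom.id (obj A)
  map_comp : ∀ {A B C : XMod} (f : XModHom A B) (g : XModHom B C),
    map (XModHom.comp g f) = XModHom.comp (map g) (map f)
  ell : ∀ A : XMod, XModHom A (obj A)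
  natural : ∀ {A B : XMod} (f : XModHom A B),
    XModHom.comp (ell B) f = XModHom.comp (map f) (ell A)
  iso_ell_obj : ∀ A : XMod, XModHom.IsIso (ell (obj A))
  iso_map_ell : ∀ A : XMod, XModHom.IsIso (map (ell A))

namespace LocalizationFunctor

/-- A crossed module is `L`-local if its coaugmentation is an isomorphism. -/
def IsLocal (L : LocalizationFunctor) (X : XMod) : Prop :=
  XModHom.IsIso (L.ell X)

/-- `L` is a regular-epi localization if every coaugmentation morphism is a
regular epimorphism. -/
def RegEpiLoc (L : LocalizationFunctor) : Prop :=
  ∀ X : XMod, XModHom.RegEpi (L.ell X)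

/-- A short exact sequence is `L`-flat if applying `L` yields a short exact sequence. -/
def LFlat (L : LocalizationFunctor) {N T Q : XMod} (κ : XModHom N T) (α : XModHom T Q) : Prop :=
  ShortExact (L.map κ) (L.map α)

end LocalizationFunctor
section Pullback

variable {T Q Q' : XMod} (α : XModHom T Q) (g : XModHom Q' Q)

/-- Level-1 part of the pullback `T ×_Q Q'`, computed componentwise. -/
def pbM : Subgroup (T.M × Q'.M) where
  carrier := {p | α.f1 p.1 = g.f1 p.2}
  one_mem' := by simp
  mul_mem' := by
    intro a b ha hb
    simp only [Set.mem_setOf_eq, Prod.fst_mul, Prod.snd_mul, map_mul] at *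
    rw [ha, hb]
  inv_mem' := by
    intro a ha
    simp only [Set.mem_setOf_eq, Prod.fst_inv, Prod.snd_inv, map_inv] at *
    rw [ha]

/-- Level-2 part of the pullback `T ×_Q Q'`, computed componentwise. -/
def pbG : Subgroup (T.G × Q'.G) where
  carrier := {p | α.f2 p.1 = g.f2 p.2}
  one_mem' := by simp
  mul_mem' := by
    intro a b ha hb
    simp only [Set.mem_setOf_eq, Prod.fst_mul, Prod.snd_mul, map_mul] at *
    rw [ha, hb]
  inv_mem' := by
    intro a ha
    simp only [Set.mem_setOf_eq, Prod.fst_inv, Prod.snd_inv, map_inv] at *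
    rw [ha]

theorem mem_pbM_iff (p : T.M × Q'.M) : p ∈ pbM α g ↔ α.f1 p.1 = g.f1 p.2 := Iff.rfl

theorem mem_pbG_iff (p : T.G × Q'.G) : p ∈ pbG α g ↔ α.f2 p.1 = g.f2 p.2 := Iff.rfl

theorem pb_act_mem {b : T.G × Q'.G} (hb : b ∈ pbG α g) {p : T.M × Q'.M}
    (hp : p ∈ pbM α g) : (T.act b.1 p.1, Q'.act b.2 p.2) ∈ pbM α g := by
  have hb' : α.f2 b.1 = g.f2 b.2 := hb
  have hp' : α.f1 p.1 = g.f1 p.2 := hp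
  show α.f1 (T.act b.1 p.1) = g.f1 (Q'.act b.2 p.2)
  rw [α.equiv, g.equiv, hb', hp']

theorem XMod.act_inv_act (X : XMod) (b : X.G) (t : X.M) :
    X.act b⁻¹ (X.act b t) = t := by
  rw [← MulAut.mul_apply, ← map_mul, inv_mul_cancel, map_one, MulAut.one_apply]

theorem XMod.act_act_inv (X : XMod) (b : X.G) (t : X.M) :
    X.act b (X.act b⁻¹ t) = t := by
  rw [← MulAut.mul_apply, ← map_mul, mul_inv_cancel, map_one, MulAut.one_apply]

/-- The action of an element of the pullback on the level-1 part, as a group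
automorphism. -/
def pbActEquiv (b : ↥(pbG α g)) : ↥(pbM α g) ≃* ↥(pbM α g) where
  toFun p := ⟨(T.act b.1.1 p.1.1, Q'.act b.1.2 p.1.2), pb_act_mem α g b.2 p.2⟩
  invFun p := ⟨(T.act b.1.1⁻¹ p.1.1, Q'.act b.1.2⁻¹ p.1.2),
    pb_act_mem α g ((pbG α g).inv_mem b.2) p.2⟩
  left_inv p := by
    apply Subtype.ext
    exact Prod.ext (T.act_inv_act _ _) (Q'.act_inv_act _ _)
  right_inv p := by
    apply Subtype.ext
    exact Prod.ext (T.act_act_inv _ _) (Q'.act_act_inv _ _)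
  map_mul' p q := by
    apply Subtype.ext
    exact Prod.ext (map_mul _ _ _) (map_mul _ _ _)

/-- The pullback `T ×_Q Q'` of `α : T → Q` along `g : Q' → Q`, computed
componentwise. -/
def pbXMod : XMod where
  M := ↥(pbM α g)
  G := ↥(pbG α g)
  act :=
    { toFun := pbActEquiv α g
      map_one' := by
        apply MulEquiv.ext
        intro p
        apply Subtype.ext
        apply Prod.ext
        · show T.act (1 : ↥(pbG α g)).1.1 p.1.1 = p.1.1
          simp
        · show Q'.act (1 : ↥(pbG α g)).1.2 p.1.2 = p.1.2
          simp
      map_mul' := by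
        intro b c
        apply MulEquiv.ext
        intro p
        apply Subtype.ext
        apply Prod.ext
        · show T.act (b * c).1.1 p.1.1 = T.act b.1.1 (T.act c.1.1 p.1.1)
          simp [map_mul]
        · show Q'.act (b * c).1.2 p.1.2 = Q'.act b.1.2 (Q'.act c.1.2 p.1.2)
          simp [map_mul] }
  d :=
    { toFun := fun p => ⟨(T.d p.1.1, Q'.d p.1.2), by
        have hp : α.f1 p.1.1 = g.f1 p.1.2 := p.2
        show α.f2 (T.d p.1.1) = g.f2 (Q'.d p.1.2)
        rw [← α.comm_d, ← g.comm_d, hp]⟩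
      map_one' := by
        apply Subtype.ext
        apply Prod.ext <;> simp
      map_mul' := by
        intro p q
        apply Subtype.ext
        apply Prod.ext <;> simp }
  act_d := by
    intro b p
    apply Subtype.ext
    apply Prod.ext
    · exact T.act_d _ _
    · exact Q'.act_d _ _
  peiffer := by
    intro p q
    apply Subtype.ext
    apply Prod.ext
    · exact T.peiffer _ _
    · exact Q'.peiffer _ _

/-- First projection of the pullback. -/
def pbFst : XModHom (pbXMod α g) T where
  f1 := (MonoidHom.fst T.M Q'.M).comp (pbM α g).subtype
  f2 := (MonoidHom.fst T.G Q'.G).comp (pbG α g).subtype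
  comm_d := fun _ => rfl
  equiv := fun _ _ => rfl

/-- Second projection of the pullback. -/
def pbSnd : XModHom (pbXMod α g) Q' where
  f1 := (MonoidHom.snd T.M Q'.M).comp (pbM α g).subtype
  f2 := (MonoidHom.snd T.G Q'.G).comp (pbG α g).subtype
  comm_d := fun _ => rfl
  equiv := fun _ _ => rfl

end Pullback
section PullbackMaps

variable {N T Q Q' : XMod}

/-- The induced morphism from the kernel `N` into the pullback `T ×_Q Q'`. -/
def pbIn (κ : XModHom N T) (α : XModHom T Q) (g : XModHom Q' Q)
    (h : XModHom.comp α κ = XModHom.triv N Q) : XModHom N (pbXMod α g) where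
  f1 :=
    { toFun := fun n => ⟨(κ.f1 n, 1), by
        show α.f1 (κ.f1 n) = g.f1 1
        have := congrArg XModHom.f1 h
        have h' : α.f1 (κ.f1 n) = 1 := DFunLike.congr_fun this n
        rw [h', map_one]⟩
      map_one' := by
        apply Subtype.ext
        apply Prod.ext <;> simp <;> first | rfl | exact map_one _
      map_mul' := by
        intro a b
        apply Subtype.ext
        show (κ.f1 (a * b), (1 : Q'.M)) = (κ.f1 a, (1 : Q'.M)) * (κ.f1 b, (1 : Q'.M))
        simp [Prod.ext_iff, map_mul] }
  f2 :=
    { toFun := fun n => ⟨(κ.f2 n, 1), by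
        show α.f2 (κ.f2 n) = g.f2 1
        have := congrArg XModHom.f2 h
        have h' : α.f2 (κ.f2 n) = 1 := DFunLike.congr_fun this n
        rw [h', map_one]⟩
      map_one' := by
        apply Subtype.ext
        apply Prod.ext <;> simp <;> first | rfl | exact map_one _
      map_mul' := by
        intro a b
        apply Subtype.ext
        show (κ.f2 (a * b), (1 : Q'.G)) = (κ.f2 a, (1 : Q'.G)) * (κ.f2 b, (1 : Q'.G))
        simp [Prod.ext_iff, map_mul] }
  comm_d := by
    intro n
    apply Subtype.ext
    apply Prod.ext
    · exact κ.comm_d n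
    · show Q'.d (1 : Q'.M) = 1
      simp
  equiv := by
    intro b n
    apply Subtype.ext
    apply Prod.ext
    · exact κ.equiv b n
    · show (1 : Q'.M) = Q'.act 1 1
      simp

/-- The induced morphism into the pullback `T ×_Q Q'` from an object mapping
trivially to `Q` through the second leg. -/
def pbInR (α : XModHom T Q) (g : XModHom Q' Q) {X : XMod} (u : XModHom X Q')
    (h : XModHom.comp g u = XModHom.triv X Q) : XModHom X (pbXMod α g) where
  f1 :=
    { toFun := fun n => ⟨(1, u.f1 n), by
        show α.f1 1 = g.f1 (u.f1 n)
        have := congrArg XModHom.f1 h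
        have h' : g.f1 (u.f1 n) = 1 := DFunLike.congr_fun this n
        rw [h', map_one]⟩
      map_one' := by
        apply Subtype.ext
        apply Prod.ext <;> simp <;> first | rfl | exact map_one _
      map_mul' := by
        intro a b
        apply Subtype.ext
        show ((1 : T.M), u.f1 (a * b)) = ((1 : T.M), u.f1 a) * ((1 : T.M), u.f1 b)
        simp [Prod.ext_iff, map_mul] }
  f2 :=
    { toFun := fun n => ⟨(1, u.f2 n), by
        show α.f2 1 = g.f2 (u.f2 n)
        have := congrArg XModHom.f2 h
        have h' : g.f2 (u.f2 n) = 1 := DFunLike.congr_fun this n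
        rw [h', map_one]⟩
      map_one' := by
        apply Subtype.ext
        apply Prod.ext <;> simp <;> first | rfl | exact map_one _
      map_mul' := by
        intro a b
        apply Subtype.ext
        show ((1 : T.G), u.f2 (a * b)) = ((1 : T.G), u.f2 a) * ((1 : T.G), u.f2 b)
        simp [Prod.ext_iff, map_mul] }
  comm_d := by
    intro n
    apply Subtype.ext
    apply Prod.ext
    · show T.d (1 : T.M) = 1
      simp
    · exact u.comm_d n
  equiv := by
    intro b n
    apply Subtype.ext
    apply Prod.ext
    · show (1 : T.M) = T.act 1 1
      simp
    · exact u.equiv b n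

/-- The morphism of pullbacks `T ×_Q Q' → E ×_Q Q'` induced by `f : T → E`
with `p ∘ f = α`. -/
def pbMapL {E : XMod} (α : XModHom T Q) (p : XModHom E Q) (g : XModHom Q' Q)
    (f : XModHom T E) (hpf : XModHom.comp p f = α) :
    XModHom (pbXMod α g) (pbXMod p g) where
  f1 :=
    { toFun := fun w => ⟨(f.f1 w.1.1, w.1.2), by
        show p.f1 (f.f1 w.1.1) = g.f1 w.1.2
        have h' : p.f1 (f.f1 w.1.1) = α.f1 w.1.1 :=
          DFunLike.congr_fun (congrArg XModHom.f1 hpf) w.1.1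
        rw [h']
        exact w.2⟩
      map_one' := by
        apply Subtype.ext
        apply Prod.ext <;> simp <;> first | rfl | exact map_one _
      map_mul' := by
        intro a b
        apply Subtype.ext
        apply Prod.ext
        · exact map_mul f.f1 a.1.1 b.1.1
        · rfl }
  f2 :=
    { toFun := fun w => ⟨(f.f2 w.1.1, w.1.2), by
        show p.f2 (f.f2 w.1.1) = g.f2 w.1.2
        have h' : p.f2 (f.f2 w.1.1) = α.f2 w.1.1 :=
          DFunLike.congr_fun (congrArg XModHom.f2 hpf) w.1.1
        rw [h']
        exact w.2⟩
      map_one' := by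
        apply Subtype.ext
        apply Prod.ext <;> simp <;> first | rfl | exact map_one _
      map_mul' := by
        intro a b
        apply Subtype.ext
        apply Prod.ext
        · exact map_mul f.f2 a.1.1 b.1.1
        · rfl }
  comm_d := by
    intro w
    apply Subtype.ext
    apply Prod.ext
    · exact f.comm_d _
    · rfl
  equiv := by
    intro b w
    apply Subtype.ext
    apply Prod.ext
    · exact f.equiv _ _
    · rfl

end PullbackMaps

/-- A commuting square is a pullback square (categorical definition). -/
def IsPullbackSquare {P X Y Z : XMod} (p1 : XModHom P X) (p2 : XModHom P Y)
    (f : XModHom X Z) (h : XModHom Y Z) : Prop :=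
  XModHom.comp f p1 = XModHom.comp h p2 ∧
    ∀ (W : XMod) (u : XModHom W X) (v : XModHom W Y),
      XModHom.comp f u = XModHom.comp h v →
        ∃! w : XModHom W P, XModHom.comp p1 w = u ∧ XModHom.comp p2 w = v

namespace LocalizationFunctor

/-- `L` is admissible for the class of regular epimorphisms: applying `L` to the
pullback of a regular epimorphism `α : LT → LQ` along the coaugmentation
`ℓ^Q : Q → LQ` yields again a pullback square. -/
def Admissible (L : LocalizationFunctor) : Prop :=
  ∀ (T Q : XMod) (α : XModHom (L.obj T) (L.obj Q)), XModHom.RegEpi α →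
    IsPullbackSquare (L.map (pbFst α (L.ell Q))) (L.map (pbSnd α (L.ell Q)))
      (L.map α) (L.map (L.ell Q))

/-- `L` is conditionally flat: the pullback of any `L`-flat short exact sequence
along any morphism is again `L`-flat. -/
def ConditionallyFlat (L : LocalizationFunctor) : Prop :=
  ∀ (N T Q : XMod) (κ : XModHom N T) (α : XModHom T Q) (hse : ShortExact κ α),
    L.LFlat κ α →
      ∀ (Q' : XMod) (g : XModHom Q' Q),
        L.LFlat (pbIn κ α g hse.1.1) (pbSnd α g)

/-- A short exact sequence `1 → N → T → Q → 1` admits a fiberwise localization: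
there is a short exact sequence `1 → LN → E → Q → 1` together with an
`L`-equivalence `T → E` compatible with the coaugmentation of `N`. -/
def AdmitsFiberwise (L : LocalizationFunctor) {N T Q : XMod} (κ : XModHom N T)
    (α : XModHom T Q) : Prop :=
  ∃ (E : XMod) (j : XModHom (L.obj N) E) (p : XModHom E Q) (e : XModHom T E),
    ShortExact j p ∧ XModHom.IsIso (L.map e) ∧
      XModHom.comp e κ = XModHom.comp j (L.ell N) ∧ XModHom.comp p e = α

end LocalizationFunctor
section Kernel

variable {N T : XMod} (f : XModHom N T)

theorem ker_act_mem {b : N.G} (hb : b ∈ f.f2.ker) {n : N.M} (hn : n ∈ f.f1.ker) :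
    N.act b n ∈ f.f1.ker := by
  have hb' : f.f2 b = 1 := hb
  have hn' : f.f1 n = 1 := hn
  show f.f1 (N.act b n) = 1
  rw [f.equiv, hb', hn', map_one]

/-- The automorphism of `ker f.f1` induced by an element of `ker f.f2`. -/
def kerActEquiv (b : ↥f.f2.ker) : ↥f.f1.ker ≃* ↥f.f1.ker where
  toFun n := ⟨N.act b.1 n.1, ker_act_mem f b.2 n.2⟩
  invFun n := ⟨N.act b.1⁻¹ n.1, ker_act_mem f (f.f2.ker.inv_mem b.2) n.2⟩
  left_inv n := Subtype.ext (N.act_inv_act _ _)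
  right_inv n := Subtype.ext (N.act_act_inv _ _)
  map_mul' n m := Subtype.ext (map_mul _ _ _)

/-- The kernel of a morphism of crossed modules, computed componentwise. -/
def kerXMod : XMod where
  M := ↥f.f1.ker
  G := ↥f.f2.ker
  act :=
    { toFun := kerActEquiv f
      map_one' := by
        apply MulEquiv.ext
        intro n
        apply Subtype.ext
        show N.act (1 : ↥f.f2.ker).1 n.1 = n.1
        simp
      map_mul' := by
        intro b c
        apply MulEquiv.ext
        intro n
        apply Subtype.ext
        show N.act (b * c).1 n.1 = N.act b.1 (N.act c.1 n.1)
        simp [map_mul] }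
  d :=
    { toFun := fun n => ⟨N.d n.1, by
        have hn : f.f1 n.1 = 1 := n.2
        show f.f2 (N.d n.1) = 1
        rw [← f.comm_d, hn, map_one]⟩
      map_one' := by
        apply Subtype.ext
        simp
      map_mul' := by
        intro a b
        apply Subtype.ext
        show N.d (a * b).1 = N.d a.1 * N.d b.1
        simp }
  act_d := by
    intro b n
    apply Subtype.ext
    exact N.act_d _ _
  peiffer := by
    intro n m
    apply Subtype.ext
    exact N.peiffer _ _

/-- The inclusion of the kernel. -/
def kerIncl : XModHom (kerXMod f) N where
  f1 := f.f1.ker.subtype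
  f2 := f.f2.ker.subtype
  comm_d := fun _ => rfl
  equiv := fun _ _ => rfl

end Kernel

/-- A crossed module is trivial if both underlying groups are trivial. -/
def XMod.IsTrivial (X : XMod) : Prop :=
  (∀ m : X.M, m = 1) ∧ ∀ b : X.G, b = 1

/-- `X` is `A`-null if the only morphism of crossed modules `A → X` is the
trivial one. -/
def ANull (A X : XMod) : Prop :=
  ∀ φ : XModHom A X, φ = XModHom.triv A X

/-- `X` is `f`-local if precomposition with `f` is a bijection on morphisms
into `X`. -/
def FLocal {B C : XMod} (f : XModHom B C) (X : XMod) : Prop :=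
  Function.Bijective fun φ : XModHom C X => XModHom.comp φ f

/-- The subgroup `[N₂, N₁]` of `N₁` generated by the elements `ᵇt·t⁻¹`. -/
def actCommutator (N : XMod) : Subgroup N.M :=
  Subgroup.closure {x | ∃ (b : N.G) (t : N.M), x = N.act b t * t⁻¹}

section NormalClosure

variable {A W : XMod} (φ : XModHom A W)

/-- The level-2 part of the normal closure of the image of `φ`:
the normal closure of `φ₂(A₂)` in `W₂`. -/
def ncl2 : Subgroup W.G :=
  Subgroup.normalClosure (Set.range φ.f2)

/-- The level-1 part of the normal closure of the image of `φ`: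
the subgroup `φ₁(A₁)^{W₂}·[φ₂(A₂)^{W₂}, W₁]` of `W₁`. -/
def ncl1 : Subgroup W.M :=
  Subgroup.closure
    ({x | ∃ (b : W.G) (m : A.M), x = W.act b (φ.f1 m)} ∪
      {x | ∃ s ∈ ncl2 φ, ∃ w : W.M, x = W.act s w * w⁻¹})

end NormalClosure

/-!
Short exact sequences of `L`-local crossed modules are `L`-flat, because `ℓ` identifies such a
sequence with its localization; this gives the forward implication.

Conversely, let `N → T → Q` be `L`-flat and `g : Q' → Q`. Then `LN → LT → LQ` is a short exact
sequence of local objects; pull it back along `ℓ_Q ∘ g`. The comparison map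
`c : T ×_Q Q' → LT ×_{LQ} Q'` is componentwise surjective, because `ℓ_N` is and `LN` is the kernel
of `Lα`, and its kernel is the image of `ker ℓ_N`, because `Lκ` is injective. So every morphism from
`T ×_Q Q'` to a local object factors uniquely through `c`, and `L c` is an isomorphism. Together with
`L ℓ_N` it identifies `L` of the pulled-back sequence with `L` of the pullback of the local
sequence, which is short exact by hypothesis.
-/

section DiagramChase

variable {N T Q N₁ T₁ Q₁ : Type*} [Group N] [Group T] [Group Q] [Group N₁] [Group T₁] [Group Q₁]
  {κ : N →* T} {α : T →* Q} {e : N →* N₁} {a : T →* T₁} {κ₁ : N₁ →* T₁} {α₁ : T₁ →* Q₁}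

theorem exists_lift_in_fiber (hκ : ∀ n, a (κ n) = κ₁ (e n)) (he : Function.Surjective e)
    (hκα : ∀ n, α (κ n) = 1) (hker : α₁.ker ≤ κ₁.range) {x : T₁} {t : T}
    (h : α₁ x = α₁ (a t)) : ∃ s, α s = α t ∧ a s = x := by
  obtain ⟨m, hm⟩ := hker (show x * (a t)⁻¹ ∈ α₁.ker by simp [MonoidHom.mem_ker, h])
  obtain ⟨n, rfl⟩ := he m
  refine ⟨κ n * t, by rw [map_mul, hκα, one_mul], ?_⟩
  rw [map_mul, hκ, hm, inv_mul_cancel_right]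

theorem exists_ker_preimage (hκ : ∀ n, a (κ n) = κ₁ (e n)) (hκ₁ : Function.Injective κ₁)
    (hker : α.ker ≤ κ.range) {t : T} (hα : α t = 1) (ha : a t = 1) :
    ∃ n, e n = 1 ∧ κ n = t := by
  obtain ⟨n, rfl⟩ := hker hα
  exact ⟨n, hκ₁ (by rw [← hκ, ha, map_one]), rfl⟩

end DiagramChase

namespace XModHom

variable {A B C D X : XMod}

theorem hom_ext {f g : XModHom A B} (h1 : ∀ x, f.f1 x = g.f1 x) (h2 : ∀ x, f.f2 x = g.f2 x) :
    f = g :=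
  ext (MonoidHom.ext h1) (MonoidHom.ext h2)

theorem congr_f1 {f g : XModHom A B} (h : f = g) (x : A.M) : f.f1 x = g.f1 x := by rw [h]

theorem congr_f2 {f g : XModHom A B} (h : f = g) (x : A.G) : f.f2 x = g.f2 x := by rw [h]

theorem comp_assoc (h : XModHom C D) (g : XModHom B C) (f : XModHom A B) :
    comp (comp h g) f = comp h (comp g f) :=
  rfl

theorem id_comp (f : XModHom A B) : comp (XModHom.id B) f = f := rfl

theorem comp_id (f : XModHom A B) : comp f (XModHom.id A) = f := rfl

theorem comp_triv (f : XModHom B C) : comp f (triv A B) = triv A C :=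
  hom_ext (fun _ => map_one f.f1) (fun _ => map_one f.f2)

theorem triv_comp (f : XModHom A B) : comp (triv B C) f = triv A C := rfl

theorem isIso_id (A : XMod) : IsIso (XModHom.id A) := ⟨XModHom.id A, rfl, rfl⟩

theorem IsIso.cancel_left {e : XModHom B C} (he : IsIso e) {u v : XModHom A B}
    (h : comp e u = comp e v) : u = v := by
  obtain ⟨j, hj, -⟩ := he
  rw [← id_comp u, ← id_comp v, ← hj, comp_assoc, comp_assoc, h]

theorem IsIso.regEpi {f : XModHom A B} (hf : IsIso f) : RegEpi f := by
  obtain ⟨j, -, hj⟩ := hf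
  exact ⟨fun y => ⟨j.f1 y, congr_f1 hj y⟩, fun y => ⟨j.f2 y, congr_f2 hj y⟩⟩

theorem comp_inv_eq_inv_comp {A' B' : XMod} {f : XModHom A B} {f' : XModHom A' B'}
    {eA : XModHom A A'} {eB : XModHom B B'} {jA : XModHom A' A} {jB : XModHom B' B}
    (hA : comp eA jA = XModHom.id A') (hB : comp jB eB = XModHom.id B)
    (h : comp f' eA = comp eB f) : comp f jA = comp jB f' := by
  rw [← id_comp (comp f jA), ← hB, comp_assoc, ← comp_assoc eB, ← h, comp_assoc, hA, comp_id]

namespace RegEpi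

variable {f : XModHom A B}

theorem cancel_right (hf : RegEpi f) {u v : XModHom B X} (h : comp u f = comp v f) : u = v :=
  hom_ext (hf.1.forall.2 (congr_f1 h)) (hf.2.forall.2 (congr_f2 h))

theorem exists_comp_eq (hf : RegEpi f) (φ : XModHom A X) (h1 : f.f1.ker ≤ φ.f1.ker)
    (h2 : f.f2.ker ≤ φ.f2.ker) : ∃ ψ : XModHom B X, comp ψ f = φ := by
  have hi1 := Function.rightInverse_surjInv hf.1
  have hi2 := Function.rightInverse_surjInv hf.2
  set p1 : B.M →* X.M := f.f1.liftOfRightInverse _ hi1 ⟨φ.f1, h1⟩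
  set p2 : B.G →* X.G := f.f2.liftOfRightInverse _ hi2 ⟨φ.f2, h2⟩
  have hp1 : ∀ x, p1 (f.f1 x) = φ.f1 x := f.f1.liftOfRightInverse_comp_apply _ hi1 ⟨φ.f1, h1⟩
  have hp2 : ∀ x, p2 (f.f2 x) = φ.f2 x := f.f2.liftOfRightInverse_comp_apply _ hi2 ⟨φ.f2, h2⟩
  refine ⟨⟨p1, p2, hf.1.forall.2 fun x => ?_, hf.2.forall.2 fun b => hf.1.forall.2 fun x => ?_⟩,
    hom_ext hp1 hp2⟩
  · rw [hp1, φ.comm_d, f.comm_d, hp2]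
  · rw [← f.equiv, hp1, hp1, hp2, φ.equiv]

theorem fLocal (hf : RegEpi f)
    (h : ∀ φ : XModHom A X, f.f1.ker ≤ φ.f1.ker ∧ f.f2.ker ≤ φ.f2.ker) : FLocal f X :=
  ⟨fun _ _ => hf.cancel_right, fun φ => hf.exists_comp_eq φ (h φ).1 (h φ).2⟩

theorem comp {g : XModHom B C} (hg : RegEpi g) (hf : RegEpi f) : RegEpi (comp g f) :=
  ⟨hg.1.comp hf.1, hg.2.comp hf.2⟩

end RegEpi

namespace IsKernelOf

variable {N T Q : XMod} {κ : XModHom N T} {α : XModHom T Q}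

theorem exists_comp_eq_kerIncl (hk : IsKernelOf κ α) :
    ∃ v : XModHom (kerXMod α) N, comp κ v = kerIncl α :=
  (hk.2 _ (kerIncl α) (hom_ext (fun x => x.2) (fun x => x.2))).exists

theorem ker_f1_le_range (hk : IsKernelOf κ α) : α.f1.ker ≤ κ.f1.range := fun t ht =>
  let ⟨v, hv⟩ := hk.exists_comp_eq_kerIncl
  ⟨v.f1 ⟨t, ht⟩, congr_f1 hv ⟨t, ht⟩⟩

theorem ker_f2_le_range (hk : IsKernelOf κ α) : α.f2.ker ≤ κ.f2.range := fun t ht =>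
  let ⟨v, hv⟩ := hk.exists_comp_eq_kerIncl
  ⟨v.f2 ⟨t, ht⟩, congr_f2 hv ⟨t, ht⟩⟩

theorem kerIncl_eq_triv (hk : IsKernelOf κ α) : kerIncl κ = triv (kerXMod κ) N :=
  (hk.2 _ (triv _ T) (comp_triv α)).unique (hom_ext (fun x => x.2) (fun x => x.2)) (comp_triv κ)

theorem injective_f1 (hk : IsKernelOf κ α) : Function.Injective κ.f1 :=
  (injective_iff_map_eq_one κ.f1).2 fun n hn => congr_f1 hk.kerIncl_eq_triv ⟨n, hn⟩

theorem injective_f2 (hk : IsKernelOf κ α) : Function.Injective κ.f2 :=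
  (injective_iff_map_eq_one κ.f2).2 fun n hn => congr_f2 hk.kerIncl_eq_triv ⟨n, hn⟩

end IsKernelOf

end XModHom

open XModHom

section IsoInvariance

variable {N T Q N' T' Q' : XMod} {κ : XModHom N T} {α : XModHom T Q}
  {κ' : XModHom N' T'} {α' : XModHom T' Q'}
  {eN : XModHom N N'} {eT : XModHom T T'} {eQ : XModHom Q Q'}

theorem XModHom.IsKernelOf.of_iso (hN : IsIso eN) (hT : IsIso eT) (hQ : IsIso eQ)
    (hκ : comp κ' eN = comp eT κ) (hα : comp α' eT = comp eQ α) (h : IsKernelOf κ' α') :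
    IsKernelOf κ α := by
  obtain ⟨jN, hjN, hNj⟩ := hN
  refine ⟨hQ.cancel_left ?_, fun X u hu => ?_⟩
  · rw [comp_triv, ← comp_assoc, ← hα, comp_assoc, ← hκ, ← comp_assoc, h.1, triv_comp]
  have hu' : comp α' (comp eT u) = triv X Q' := by
    rw [← comp_assoc, hα, comp_assoc, hu, comp_triv]
  obtain ⟨v, hv, hv_unique⟩ := h.2 X _ hu'
  refine ⟨comp jN v, hT.cancel_left ?_, fun w (hw : comp κ w = u) => ?_⟩
  · rw [← comp_assoc, ← hκ, comp_assoc, ← comp_assoc eN, hNj, id_comp, hv]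
  · have hw' : comp κ' (comp eN w) = comp eT u := by rw [← comp_assoc, hκ, comp_assoc, hw]
    rw [← hv_unique _ hw', ← comp_assoc, hjN, id_comp]

theorem ShortExact.of_iso (hN : IsIso eN) (hT : IsIso eT) (hQ : IsIso eQ)
    (hκ : comp κ' eN = comp eT κ) (hα : comp α' eT = comp eQ α) (h : ShortExact κ' α') :
    ShortExact κ α := by
  obtain ⟨jQ, hjQ, hQj⟩ := hQ
  have hα_eq : comp jQ (comp α' eT) = α := by rw [hα, ← comp_assoc, hjQ, id_comp]
  refine ⟨h.1.of_iso hN hT ⟨jQ, hjQ, hQj⟩ hκ hα, hα_eq ▸ ?_⟩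
  exact IsIso.regEpi ⟨eQ, hQj, hjQ⟩ |>.comp (h.2.comp hT.regEpi)

end IsoInvariance

section PullbackMap

variable {T Q Q' T₁ Q₁ : XMod} {α : XModHom T Q} {α₁ : XModHom T₁ Q₁}
  (a : XModHom T T₁) (b : XModHom Q Q₁) (h : comp b α = comp α₁ a) (g : XModHom Q' Q)

def pbMap : XModHom (pbXMod α g) (pbXMod α₁ (comp b g)) where
  f1 := ((a.f1.prodMap (MonoidHom.id Q'.M)).comp (pbM α g).subtype).codRestrict _ fun w => by
    show α₁.f1 (a.f1 w.1.1) = b.f1 (g.f1 w.1.2)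
    rw [← (mem_pbM_iff α g _).1 w.2]
    exact (congr_f1 h w.1.1).symm
  f2 := ((a.f2.prodMap (MonoidHom.id Q'.G)).comp (pbG α g).subtype).codRestrict _ fun w => by
    show α₁.f2 (a.f2 w.1.1) = b.f2 (g.f2 w.1.2)
    rw [← (mem_pbG_iff α g _).1 w.2]
    exact (congr_f2 h w.1.1).symm
  comm_d w := Subtype.ext (Prod.ext (a.comm_d w.1.1) rfl)
  equiv c w := Subtype.ext (Prod.ext (a.equiv c.1.1 w.1.1) rfl)

theorem pbSnd_comp_pbMap : comp (pbSnd α₁ (comp b g)) (pbMap a b h g) = pbSnd α g := rfl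

theorem pbMap_comp_pbIn {N N₁ : XMod} {κ : XModHom N T} {κ₁ : XModHom N₁ T₁} (e : XModHom N N₁)
    (hκ : comp a κ = comp κ₁ e) (hκα : comp α κ = triv N Q) (hκα₁ : comp α₁ κ₁ = triv N₁ Q₁) :
    comp (pbMap a b h g) (pbIn κ α g hκα) = comp (pbIn κ₁ α₁ (comp b g) hκα₁) e :=
  hom_ext (fun n => Subtype.ext (Prod.ext (congr_f1 hκ n) rfl))
    (fun n => Subtype.ext (Prod.ext (congr_f2 hκ n) rfl))

end PullbackMap

namespace LocalizationFunctor

variable (L : LocalizationFunctor) {A B X : XMod}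

theorem isLocal_obj (A : XMod) : L.IsLocal (L.obj A) := L.iso_ell_obj A

theorem natural_f1 (f : XModHom A B) (x : A.M) :
    (L.ell B).f1 (f.f1 x) = (L.map f).f1 ((L.ell A).f1 x) :=
  congr_f1 (L.natural f) x

theorem natural_f2 (f : XModHom A B) (x : A.G) :
    (L.ell B).f2 (f.f2 x) = (L.map f).f2 ((L.ell A).f2 x) :=
  congr_f2 (L.natural f) x

theorem IsLocal.exists_comp_ell_eq {L : LocalizationFunctor} (hX : L.IsLocal X)
    (φ : XModHom A X) : ∃ ψ : XModHom (L.obj A) X, comp ψ (L.ell A) = φ := by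
  obtain ⟨j, hj, -⟩ := hX
  exact ⟨comp j (L.map φ), by rw [comp_assoc, ← L.natural, ← comp_assoc, hj, id_comp]⟩

theorem IsLocal.hom_ext_ell {L : LocalizationFunctor} (hX : L.IsLocal X)
    {u v : XModHom (L.obj A) X} (h : comp u (L.ell A) = comp v (L.ell A)) : u = v := by
  obtain ⟨m, -, hm⟩ := L.iso_map_ell A
  have hLuv : L.map u = L.map v := by
    rw [← comp_id (L.map u), ← comp_id (L.map v), ← hm, ← comp_assoc, ← comp_assoc,
      ← L.map_comp, ← L.map_comp, h]
  exact hX.cancel_left (by rw [L.natural, L.natural, hLuv])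

theorem isIso_map_of_fLocal (f : XModHom A B) (hf : ∀ X, L.IsLocal X → FLocal f X) :
    IsIso (L.map f) := by
  obtain ⟨ψ, hψ : comp ψ f = L.ell A⟩ := (hf _ (L.isLocal_obj A)).2 (L.ell A)
  obtain ⟨k, hk⟩ := (L.isLocal_obj A).exists_comp_ell_eq ψ
  have hfψ : comp (L.map f) ψ = L.ell B :=
    (hf _ (L.isLocal_obj B)).1 (by
      show comp (comp (L.map f) ψ) f = comp (L.ell B) f
      rw [comp_assoc, hψ, L.natural])
  refine ⟨k, (L.isLocal_obj A).hom_ext_ell ?_, (L.isLocal_obj B).hom_ext_ell ?_⟩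
  · rw [comp_assoc, ← L.natural, ← comp_assoc, hk, hψ, id_comp]
  · rw [comp_assoc, hk, hfψ, id_comp]

variable {N T Q Q' : XMod} {κ : XModHom N T} {α : XModHom T Q}

theorem lFlat_of_isLocal (hse : ShortExact κ α) (hN : L.IsLocal N) (hT : L.IsLocal T)
    (hQ : L.IsLocal Q) : L.LFlat κ α := by
  obtain ⟨jN, hjN, hNj⟩ := hN
  obtain ⟨jT, hjT, hTj⟩ := hT
  obtain ⟨jQ, hjQ, hQj⟩ := hQ
  exact hse.of_iso ⟨L.ell N, hNj, hjN⟩ ⟨L.ell T, hTj, hjT⟩ ⟨L.ell Q, hQj, hjQ⟩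
    (comp_inv_eq_inv_comp hNj hjT (L.natural κ).symm)
    (comp_inv_eq_inv_comp hTj hjQ (L.natural α).symm)

theorem regEpi_pbMap_ell (hL : L.RegEpiLoc) (hse : ShortExact κ α) (hflat : L.LFlat κ α)
    (g : XModHom Q' Q) : RegEpi (pbMap (L.ell T) (L.ell Q) (L.natural α) g) := by
  constructor
  · rintro ⟨⟨x, q'⟩, hx⟩
    obtain ⟨t, ht⟩ := hse.2.1 (g.f1 q')
    have hx' : (L.map α).f1 x = (L.map α).f1 ((L.ell T).f1 t) := by
      rw [← L.natural_f1, ht]; exact hx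
    obtain ⟨s, hs, rfl⟩ := exists_lift_in_fiber (L.natural_f1 κ) (hL N).1
      (congr_f1 hse.1.1) hflat.1.ker_f1_le_range hx'
    exact ⟨⟨(s, q'), hs.trans ht⟩, rfl⟩
  · rintro ⟨⟨x, q'⟩, hx⟩
    obtain ⟨t, ht⟩ := hse.2.2 (g.f2 q')
    have hx' : (L.map α).f2 x = (L.map α).f2 ((L.ell T).f2 t) := by
      rw [← L.natural_f2, ht]; exact hx
    obtain ⟨s, hs, rfl⟩ := exists_lift_in_fiber (L.natural_f2 κ) (hL N).2
      (congr_f2 hse.1.1) hflat.1.ker_f2_le_range hx'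
    exact ⟨⟨(s, q'), hs.trans ht⟩, rfl⟩

theorem ker_pbMap_ell_f1_le (hse : ShortExact κ α) (hflat : L.LFlat κ α) (g : XModHom Q' Q) :
    (pbMap (L.ell T) (L.ell Q) (L.natural α) g).f1.ker ≤
      (L.ell N).f1.ker.map (pbIn κ α g hse.1.1).f1 := by
  rintro ⟨⟨t, q'⟩, hw⟩ hc
  have ht : (L.ell T).f1 t = 1 := congrArg (fun w => w.1.1) hc
  obtain rfl : q' = 1 := congrArg (fun w => w.1.2) hc
  obtain ⟨n, hn, rfl⟩ := exists_ker_preimage (L.natural_f1 κ) hflat.1.injective_f1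
    hse.1.ker_f1_le_range (hw.trans (map_one _)) ht
  exact ⟨n, hn, rfl⟩

theorem ker_pbMap_ell_f2_le (hse : ShortExact κ α) (hflat : L.LFlat κ α) (g : XModHom Q' Q) :
    (pbMap (L.ell T) (L.ell Q) (L.natural α) g).f2.ker ≤
      (L.ell N).f2.ker.map (pbIn κ α g hse.1.1).f2 := by
  rintro ⟨⟨t, q'⟩, hw⟩ hc
  have ht : (L.ell T).f2 t = 1 := congrArg (fun w => w.1.1) hc
  obtain rfl : q' = 1 := congrArg (fun w => w.1.2) hc
  obtain ⟨n, hn, rfl⟩ := exists_ker_preimage (L.natural_f2 κ) hflat.1.injective_f2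
    hse.1.ker_f2_le_range (hw.trans (map_one _)) ht
  exact ⟨n, hn, rfl⟩

theorem isIso_map_pbMap_ell (hL : L.RegEpiLoc) (hse : ShortExact κ α) (hflat : L.LFlat κ α)
    (g : XModHom Q' Q) : IsIso (L.map (pbMap (L.ell T) (L.ell Q) (L.natural α) g)) := by
  refine L.isIso_map_of_fLocal _ fun X hX => (L.regEpi_pbMap_ell hL hse hflat g).fLocal fun φ => ?_
  obtain ⟨ψ, hψ⟩ := hX.exists_comp_ell_eq (comp φ (pbIn κ α g hse.1.1))
  constructor
  · refine (L.ker_pbMap_ell_f1_le hse hflat g).trans (Subgroup.map_le_iff_le_comap.2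
      fun n (hn : (L.ell N).f1 n = 1) => ?_)
    show (comp φ (pbIn κ α g hse.1.1)).f1 n = 1
    rw [← hψ]
    exact (congrArg ψ.f1 hn).trans (map_one _)
  · refine (L.ker_pbMap_ell_f2_le hse hflat g).trans (Subgroup.map_le_iff_le_comap.2
      fun n (hn : (L.ell N).f2 n = 1) => ?_)
    show (comp φ (pbIn κ α g hse.1.1)).f2 n = 1
    rw [← hψ]
    exact (congrArg ψ.f2 hn).trans (map_one _)

end LocalizationFunctor

/-- A regular-epi localization functor `L` is conditionally
flat if and only if for every short exact sequence of `L`-local crossed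
modules, the pullback sequence along any morphism `Q' → Q` is `L`-flat. -/
theorem conditionallyFlat_iff_local_sequences (L : LocalizationFunctor)
    (hL : L.RegEpiLoc) :
    L.ConditionallyFlat ↔
      ∀ (N T Q : XMod) (κ : XModHom N T) (α : XModHom T Q)
        (hse : ShortExact κ α), L.IsLocal N → L.IsLocal T → L.IsLocal Q →
          ∀ (Q' : XMod) (g : XModHom Q' Q),
            L.LFlat (pbIn κ α g hse.1.1) (pbSnd α g) := by
  refine ⟨fun hcf N T Q κ α hse hN hT hQ => hcf N T Q κ α hse (L.lFlat_of_isLocal hse hN hT hQ),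
    fun H N T Q κ α hse hflat Q' g => ?_⟩
  have hloc := H _ _ _ (L.map κ) (L.map α) hflat (L.isLocal_obj N) (L.isLocal_obj T)
    (L.isLocal_obj Q) Q' (comp (L.ell Q) g)
  refine hloc.of_iso (L.iso_map_ell N) (L.isIso_map_pbMap_ell hL hse hflat g) (isIso_id _) ?_ ?_
  · rw [← L.map_comp (L.ell N), ← L.map_comp (pbIn κ α g hse.1.1),
      pbMap_comp_pbIn _ _ _ _ _ (L.natural κ)]
  · rw [← L.map_comp, pbSnd_comp_pbMap, id_comp]
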